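/- arXiv:0705.4126 — 2 statements merged into one kernel-verified Lean document; each statement's English description precedes it below -/
import Mathlib

section
/- For γ < ω₁ and ν : γ → G satisfying the support-finiteness condition (for every β < γ and every n, {α < β : n ∈ supp(ν(α))} is finite), the map f_ν is a well-defined bijection of the universe of M_{<γ} onto itself satisfying f_ν ∘ f_ν = id. -/
noncomputable section
open Set

/-- `G` is the vector space over `ℤ/2ℤ` with basis indexed by `ℕ`. -/
abbrev G : Type := ℕ →₀ ZMod 2

/-- The basis element `xₙ`. -/
def xg (n : ℕ) : G := Finsupp.single n 1

/-- `G⁰ₙ`: the subspace generated by the `x_k` for `k ≠ n`. -/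
def G0 (n : ℕ) : Set G :=
  (Submodule.span (ZMod 2) {y : G | ∃ k : ℕ, k ≠ n ∧ y = xg k} : Submodule (ZMod 2) G)

/-- `G¹ₙ = xₙ + G⁰ₙ`, the nontrivial coset. -/
def G1 (n : ℕ) : Set G := (fun z => xg n + z) '' G0 n

/-- The family `𝒢 = {Gˡₙ : n < ω, l ∈ {0,1}}`. -/
def Gfam : Set (Set G) := {S | ∃ n : ℕ, S = G0 n ∨ S = G1 n}

/-- The first uncountable ordinal. -/
def omega1 : Ordinal := (Cardinal.aleph 1).ord

/-- The universe of the structure `M`: elements of the parts `A_α = {α} × G`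
and of the parts `B_α ⊆ {η : α → 𝒢}` (sequences are padded by `∅` beyond `α`). -/
inductive MU : Type 1 where
  | a : Ordinal → G → MU
  | b : Ordinal → (Ordinal → Set G) → MU

/-- The condition for `η` (as a total function, padded by `∅`) to code a member of `B_α`:
its values below `α` are in `𝒢` and for some `n` it equals `G⁰ₙ` with finitely many
exceptions. -/
def okB (α : Ordinal) (η : Ordinal → Set G) : Prop :=
  (∀ β, β < α → η β ∈ Gfam) ∧ (∀ β, ¬ β < α → η β = ∅) ∧
    ∃ n : ℕ, {β : Ordinal | β < α ∧ η β ≠ G0 n}.Finite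

/-- The universe of `M_{<γ}`, i.e. `∪ {A_β ∪ B_β : β < γ}`. -/
def MUuniv (γ : Ordinal) : Set MU :=
  {u | match u with
       | .a α _ => α < γ
       | .b α η => α < γ ∧ okB α η}

/-- `u` belongs to the `A`-part (the predicate `P₁`; `P₂` is its negation). -/
def isA : MU → Prop
  | .a _ _ => True
  | .b _ _ => False

/-- The index `α` of the part `A_α` or `B_α` containing the element. -/
def idx : MU → Ordinal
  | .a α _ => α
  | .b α _ => α

/-- The relation `E₁`. -/
def E1 (u v : MU) : Prop := isA u ∧ isA v ∧ idx u ≤ idx v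

/-- The relation `E₂`. -/
def E2 (u v : MU) : Prop := ¬ isA u ∧ ¬ isA v ∧ idx u ≤ idx v

/-- The unary function `F_y`: translation by `y` on each `A_α`, identity on each `B_α`. -/
def Fy (y : G) : MU → MU
  | .a α g => .a α (g + y)
  | .b α η => .b α η

/-- The relation `R = {(η, (α,x)) : α < lh η, x ∈ η(α)}`. -/
def Rmem (u v : MU) : Prop :=
  ∃ (β : Ordinal) (η : Ordinal → Set G) (α : Ordinal) (g : G),
    u = .b β η ∧ v = .a α g ∧ α < β ∧ g ∈ η α

/-- `f` is an automorphism of the restriction of `M` to the set `S`. -/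
structure IsAut (S : Set MU) (f : MU → MU) : Prop where
  bij : Set.BijOn f S S
  p1 : ∀ u ∈ S, (isA (f u) ↔ isA u)
  e1 : ∀ u ∈ S, ∀ v ∈ S, (E1 (f u) (f v) ↔ E1 u v)
  e2 : ∀ u ∈ S, ∀ v ∈ S, (E2 (f u) (f v) ↔ E2 u v)
  fy : ∀ (y : G), ∀ u ∈ S, f (Fy y u) = Fy y (f u)
  r : ∀ u ∈ S, ∀ v ∈ S, (Rmem (f u) (f v) ↔ Rmem u v)

/-- The map `f_ν`: translation by `ν(α)` on `A_α`, coset translation on the `B`-parts. -/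
def fnu (ν : Ordinal → G) : MU → MU
  | .a α g => .a α (g + ν α)
  | .b α η => .b α (fun β => (fun z => ν β + z) '' η β)

/-- The support-finiteness condition on `ν : γ → G`:
for every `β < γ` and every `n`, `{α < β : n ∈ supp ν(α)}` is finite. -/
def SuppFin (γ : Ordinal) (ν : Ordinal → G) : Prop :=
  ∀ β < γ, ∀ n : ℕ, {α : Ordinal | α < β ∧ n ∈ (ν α).support}.Finite


lemma addG_self (g : G) : g + g = 0 := by
  ext n
  have h : ∀ a : ZMod 2, a + a = 0 := by decide
  simp [Finsupp.add_apply, h]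

lemma G0_eq (n : ℕ) : G0 n = {g : G | g n = 0} := by
  apply subset_antisymm
  · intro g hg
    have hle : (Submodule.span (ZMod 2) {y : G | ∃ k : ℕ, k ≠ n ∧ y = xg k}) ≤
        LinearMap.ker (Finsupp.lapply n : G →ₗ[ZMod 2] ZMod 2) := by
      rw [Submodule.span_le]
      rintro y ⟨k, hk, rfl⟩
      simp [LinearMap.mem_ker, xg, Finsupp.single_apply, hk]
    exact hle hg
  · intro g hg
    have hg0 : g n = 0 := hg
    rw [G0, SetLike.mem_coe, ← Finsupp.sum_single g, Finsupp.sum]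
    apply Submodule.sum_mem
    intro k hk
    have hkn : k ≠ n := by
      intro h; subst h; exact (Finsupp.mem_support_iff.mp hk) hg0
    have hrw : Finsupp.single k (g k) = (g k) • xg k := by
      simp [xg, Finsupp.smul_single]
    rw [hrw]
    exact Submodule.smul_mem _ _ (Submodule.subset_span ⟨k, hkn, rfl⟩)

lemma translate_level (y : G) (n : ℕ) (c : ZMod 2) :
    (fun z => y + z) '' {g : G | g n = c} = {g : G | g n = y n + c} := by
  ext g
  constructor
  · rintro ⟨z, hz, rfl⟩
    have hz' : z n = c := hz
    show (y + z) n = y n + c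
    rw [Finsupp.add_apply, hz']
  · intro hg
    have hg' : g n = y n + c := hg
    refine ⟨y + g, ?_, show y + (y + g) = g by rw [← add_assoc, addG_self, zero_add]⟩
    show (y + g) n = c
    have h2 : ∀ a b : ZMod 2, a + (a + b) = b := by decide
    rw [Finsupp.add_apply, hg', h2]

lemma G1_eq (n : ℕ) : G1 n = {g : G | g n = 1} := by
  rw [G1, G0_eq, translate_level]
  have : xg n n = 1 := by simp [xg]
  rw [this, add_zero]

lemma mem_Gfam_iff (S : Set G) :
    S ∈ Gfam ↔ ∃ n : ℕ, ∃ c : ZMod 2, S = {g : G | g n = c} := by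
  constructor
  · rintro ⟨n, h | h⟩
    · exact ⟨n, 0, by rw [h, G0_eq]⟩
    · exact ⟨n, 1, by rw [h, G1_eq]⟩
  · rintro ⟨n, c, rfl⟩
    have h01 : ∀ c : ZMod 2, c = 0 ∨ c = 1 := by decide
    rcases h01 c with rfl | rfl
    · exact ⟨n, Or.inl (G0_eq n).symm⟩
    · exact ⟨n, Or.inr (G1_eq n).symm⟩

lemma Gfam_translate {S : Set G} (hS : S ∈ Gfam) (y : G) :
    (fun z => y + z) '' S ∈ Gfam := by
  rw [mem_Gfam_iff] at hS ⊢
  obtain ⟨n, c, rfl⟩ := hS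
  exact ⟨n, y n + c, translate_level y n c⟩

lemma translate_G0 {y : G} {n : ℕ} (hy : y n = 0) :
    (fun z => y + z) '' G0 n = G0 n := by
  rw [G0_eq, translate_level, hy, zero_add]

lemma image_translate_translate (y : G) (S : Set G) :
    (fun z => y + z) '' ((fun z => y + z) '' S) = S := by
  rw [← Set.image_comp]
  have h : ((fun z : G => y + z) ∘ fun z : G => y + z) = id := by
    funext z
    simp only [Function.comp_apply, id_eq, ← add_assoc, addG_self, zero_add]
  rw [h, Set.image_id]

lemma fnu_invol (ν : Ordinal → G) (u : MU) : fnu ν (fnu ν u) = u := by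
  cases u with
  | a α g => simp [fnu, add_assoc, addG_self]
  | b α η =>
    simp only [fnu]
    congr 1
    funext β
    exact image_translate_translate (ν β) (η β)

lemma fnu_mapsTo {γ : Ordinal} {ν : Ordinal → G} (hν : SuppFin γ ν) :
    Set.MapsTo (fnu ν) (MUuniv γ) (MUuniv γ) := by
  intro u hu
  cases u with
  | a α g => exact hu
  | b α η =>
    obtain ⟨hαγ, h1, h2, n, hfin⟩ := hu
    refine ⟨hαγ, ?_, ?_, n, ?_⟩
    · intro β hβ; exact Gfam_translate (h1 β hβ) (ν β)
    · intro β hβ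
      show (fun z => ν β + z) '' η β = ∅
      rw [h2 β hβ, Set.image_empty]
    · apply Set.Finite.subset (hfin.union (hν α hαγ n))
      rintro β ⟨hβα, hne⟩
      by_cases hs : n ∈ (ν β).support
      · exact Or.inr ⟨hβα, hs⟩
      · left
        refine ⟨hβα, fun hη => hne ?_⟩
        have h0 : ν β n = 0 := by simpa [Finsupp.mem_support_iff] using hs
        show (fun z => ν β + z) '' η β = G0 n
        rw [hη]
        exact translate_G0 h0

/-- For `γ < ω₁` and `ν : γ → G` satisfying the support-finiteness
condition, the map `f_ν` is a well-defined bijection of the universe of `M_{<γ}`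
onto itself satisfying `f_ν ∘ f_ν = id`. -/
theorem stmt4 (γ : Ordinal) (hγ : γ < omega1) (ν : Ordinal → G) (hν : SuppFin γ ν) :
    Set.BijOn (fnu ν) (MUuniv γ) (MUuniv γ) ∧
    ∀ u ∈ MUuniv γ, fnu ν (fnu ν u) = u := by
  have hmaps := fnu_mapsTo hν
  refine ⟨Set.InvOn.bijOn ⟨fun u _ => fnu_invol ν u, fun u _ => fnu_invol ν u⟩ hmaps hmaps,
    fun u _ => fnu_invol ν u⟩
end
end

section
/- Conversely, if γ < ω₁ and f is an automorphism of M_{<γ}, then there exists ν : γ → G satisfying the support-finiteness condition such that f = f_ν. -/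
noncomputable section
open Set

/-!
An automorphism `f` of `M_{<γ}` preserves `P₁` and the preorders `E₁`, `E₂`, so by induction
on the index it cannot move any element to a part of smaller index; applied to `f⁻¹` as well,
`f` maps every part `A_α`, `B_α` to itself. Commuting with the translations `F_y` forces `f` to
be translation by `ν(α) := f(α, 0)` on `A_α`, and preservation of `R` then forces
`f(η)(β) = ν(β) + η(β)`. Finally, `f` maps the sequence constantly `G⁰ₙ` below `β` into `B_β`,
so `ν(α) + G⁰ₙ = G⁰ₘ` for all but finitely many `α < β`, which happens only if `n ∉ supp ν(α)`.
-/

lemma mem_image_add_left_iff_of_zmod_two {V : Type*} [AddCommGroup V] [Module (ZMod 2) V]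
    {c x : V} {s : Set V} : x ∈ (c + ·) '' s ↔ c + x ∈ s := by
  rw [image_add_left, mem_preimage, ZModModule.neg_eq_self]

lemma zero_mem_G0 (n : ℕ) : (0 : G) ∈ G0 n :=
  Submodule.zero_mem _

lemma apply_eq_zero_of_mem_G0 {n : ℕ} {y : G} (hy : y ∈ G0 n) : y n = 0 := by
  have hspan : Submodule.span (ZMod 2) {y : G | ∃ k : ℕ, k ≠ n ∧ y = xg k} ≤
      LinearMap.ker (Finsupp.lapply n) := by
    rw [Submodule.span_le]
    rintro _ ⟨k, hk, rfl⟩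
    simp [xg, Finsupp.single_eq_of_ne' hk]
  simpa using hspan hy

lemma image_add_G0_ne_G0 {c : G} {n : ℕ} (hc : c n ≠ 0) (m : ℕ) :
    (c + ·) '' G0 n ≠ G0 m := by
  intro h
  have h0 : (0 : G) ∈ (c + ·) '' G0 n := h ▸ zero_mem_G0 m
  rw [mem_image_add_left_iff_of_zmod_two, add_zero] at h0
  exact hc (apply_eq_zero_of_mem_G0 h0)

def G0Seq (n : ℕ) (β : Ordinal) : Ordinal → Set G := fun α => if α < β then G0 n else ∅

lemma okB_G0Seq (n : ℕ) (β : Ordinal) : okB β (G0Seq n β) := by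
  refine ⟨fun α hα => ⟨n, Or.inl (if_pos hα)⟩, fun α hα => if_neg hα, n, ?_⟩
  convert finite_empty
  ext α
  simp +contextual [G0Seq]

lemma finite_support_of_okB_image_add_G0Seq {ν : Ordinal → G} {β : Ordinal} {n : ℕ}
    (h : okB β (fun α => (fun z => ν α + z) '' G0Seq n β α)) :
    {α : Ordinal | α < β ∧ n ∈ (ν α).support}.Finite := by
  obtain ⟨-, -, m, hm⟩ := h
  refine hm.subset fun α ⟨hα, hn⟩ => ⟨hα, ?_⟩
  simp only [G0Seq, if_pos hα]
  exact image_add_G0_ne_G0 (Finsupp.mem_support_iff.mp hn) m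

instance : Nonempty MU := ⟨.a 0 0⟩

def aval : MU → G
  | .a _ g => g
  | .b _ _ => 0

lemma eq_a_idx_aval {u : MU} (hu : isA u) : u = .a (idx u) (aval u) := by
  cases u with
  | a => rfl
  | b => exact hu.elim

lemma exists_eq_b_idx {u : MU} (hu : ¬ isA u) : ∃ η, u = .b (idx u) η := by
  cases u with
  | a => exact (hu trivial).elim
  | b α η => exact ⟨η, rfl⟩

lemma idx_lt_of_mem_MUuniv {γ : Ordinal} {u : MU} (hu : u ∈ MUuniv γ) : idx u < γ := by
  cases u with
  | a => exact hu
  | b => exact hu.1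

lemma Rmem_b_a_iff {β α : Ordinal} {η : Ordinal → Set G} {g : G} :
    Rmem (.b β η) (.a α g) ↔ α < β ∧ g ∈ η α := by
  constructor
  · rintro ⟨_, _, _, _, ⟨⟩, ⟨⟩, hα, hg⟩
    exact ⟨hα, hg⟩
  · rintro ⟨hα, hg⟩
    exact ⟨β, η, α, g, rfl, rfl, hα, hg⟩

lemma Set.BijOn.invFunOn_rel_iff {α : Type*} [Nonempty α] {s : Set α} {f : α → α}
    {r : α → α → Prop} (hf : BijOn f s s) (hr : ∀ u ∈ s, ∀ v ∈ s, r (f u) (f v) ↔ r u v)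
    {u v : α} (hu : u ∈ s) (hv : v ∈ s) :
    r (Function.invFunOn f s u) (Function.invFunOn f s v) ↔ r u v := by
  have hmaps := hf.surjOn.mapsTo_invFunOn
  rw [← hr _ (hmaps hu) _ (hmaps hv), hf.invOn_invFunOn.2 hu, hf.invOn_invFunOn.2 hv]

lemma idx_le_idx_apply_of_reflect {S : Set MU} {f : MU → MU} {P : MU → Prop}
    (hP : ∀ u ∈ S, P u → P (f u))
    (hE : ∀ u ∈ S, ∀ v ∈ S, P (f u) ∧ P (f v) ∧ idx (f u) ≤ idx (f v) → idx u ≤ idx v)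
    (hw : ∀ u ∈ S, P u → ∀ δ < idx u, ∃ w ∈ S, P w ∧ idx w = δ)
    {u : MU} (hu : u ∈ S) (hPu : P u) : idx u ≤ idx (f u) := by
  induction hα : idx u using WellFoundedLT.induction generalizing u with
  | _ α IH =>
    refine le_of_forall_lt fun δ hδ => ?_
    obtain ⟨w, hwS, hPw, rfl⟩ := hw u hu hPu _ (hα ▸ hδ)
    have hlt : idx (f w) < idx (f u) := not_le.mp fun hle =>
      (hα ▸ hδ).not_ge (hE u hu w hwS ⟨hP u hu hPu, hP w hwS hPw, hle⟩)
    exact (IH _ hδ hwS hPw rfl).trans_lt hlt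

lemma idx_le_idx_apply {γ : Ordinal} {f : MU → MU}
    (hp1 : ∀ u ∈ MUuniv γ, isA (f u) ↔ isA u)
    (he1 : ∀ u ∈ MUuniv γ, ∀ v ∈ MUuniv γ, E1 (f u) (f v) ↔ E1 u v)
    (he2 : ∀ u ∈ MUuniv γ, ∀ v ∈ MUuniv γ, E2 (f u) (f v) ↔ E2 u v)
    {u : MU} (hu : u ∈ MUuniv γ) : idx u ≤ idx (f u) := by
  by_cases hA : isA u
  · refine idx_le_idx_apply_of_reflect (P := isA) (fun v hv => (hp1 v hv).2)
      (fun v hv w hw h => ((he1 v hv w hw).1 h).2.2) ?_ hu hA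
    exact fun v hv _ δ hδ => ⟨.a δ 0, hδ.trans (idx_lt_of_mem_MUuniv hv), trivial, rfl⟩
  · refine idx_le_idx_apply_of_reflect (P := fun v => ¬ isA v) (fun v hv => mt (hp1 v hv).1)
      (fun v hv w hw h => ((he2 v hv w hw).1 h).2.2) ?_ hu hA
    exact fun v hv _ δ hδ =>
      ⟨.b δ (G0Seq 0 δ), ⟨hδ.trans (idx_lt_of_mem_MUuniv hv), okB_G0Seq 0 δ⟩, id, rfl⟩

def autShift (f : MU → MU) (α : Ordinal) : G := aval (f (.a α 0))

namespace IsAut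

variable {γ : Ordinal} {f : MU → MU}

lemma idx_apply (hf : IsAut (MUuniv γ) f) {u : MU} (hu : u ∈ MUuniv γ) : idx (f u) = idx u := by
  set g := Function.invFunOn f (MUuniv γ)
  have hgf : g (f u) = u := hf.bij.invOn_invFunOn.1 hu
  have hle : idx (f u) ≤ idx (g (f u)) :=
    idx_le_idx_apply (fun v hv => hf.bij.invFunOn_rel_iff (r := fun u _ => isA u)
        (fun u hu _ _ => hf.p1 u hu) hv hv)
      (fun _ hv _ hw => hf.bij.invFunOn_rel_iff hf.e1 hv hw)
      (fun _ hv _ hw => hf.bij.invFunOn_rel_iff hf.e2 hv hw) (hf.bij.mapsTo hu)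
  rw [hgf] at hle
  exact le_antisymm hle (idx_le_idx_apply hf.p1 hf.e1 hf.e2 hu)

lemma apply_a (hf : IsAut (MUuniv γ) f) {α : Ordinal} (hα : α < γ) (y : G) :
    f (.a α y) = .a α (y + autShift f α) := by
  have hmem : MU.a α 0 ∈ MUuniv γ := hα
  have h0 : f (.a α 0) = .a α (autShift f α) := by
    have h := eq_a_idx_aval ((hf.p1 _ hmem).2 trivial)
    rwa [hf.idx_apply hmem] at h
  calc f (.a α y) = f (Fy y (.a α 0)) := by simp [Fy]
    _ = Fy y (f (.a α 0)) := hf.fy y _ hmem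
    _ = .a α (y + autShift f α) := by rw [h0, Fy, add_comm]

lemma apply_b (hf : IsAut (MUuniv γ) f) {α : Ordinal} {η : Ordinal → Set G}
    (hu : MU.b α η ∈ MUuniv γ) : f (.b α η) = fnu (autShift f) (.b α η) := by
  obtain ⟨η', hη'⟩ := exists_eq_b_idx fun h => ((hf.p1 _ hu).1 h : isA (MU.b α η))
  rw [hf.idx_apply hu, idx] at hη'
  have hok' : okB α η' := (hη' ▸ hf.bij.mapsTo hu : MU.b α η' ∈ MUuniv γ).2
  rw [hη', fnu]
  congr 1
  funext δ
  by_cases hδ : δ < α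
  · ext x
    -- `R` relates `f η` to `f (δ, ν δ + x) = (δ, x)` exactly when it relates `η` to `(δ, ν δ + x)`
    have hR := hf.r _ hu (.a δ (autShift f δ + x)) (hδ.trans hu.1)
    rw [hη', hf.apply_a (hδ.trans hu.1), Rmem_b_a_iff, Rmem_b_a_iff, add_right_comm,
      ZModModule.add_self, zero_add] at hR
    rw [mem_image_add_left_iff_of_zmod_two]
    simpa [hδ] using hR
  · rw [hok'.2.1 δ hδ, hu.2.2.1 δ hδ, image_empty]

lemma eqOn_fnu (hf : IsAut (MUuniv γ) f) : EqOn f (fnu (autShift f)) (MUuniv γ) := by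
  intro u hu
  cases u with
  | a α y => exact hf.apply_a hu y
  | b α η => exact hf.apply_b hu

lemma suppFin (hf : IsAut (MUuniv γ) f) : SuppFin γ (autShift f) := by
  intro β hβ n
  have hu : MU.b β (G0Seq n β) ∈ MUuniv γ := ⟨hβ, okB_G0Seq n β⟩
  have himage := hf.bij.mapsTo hu
  rw [hf.eqOn_fnu hu] at himage
  exact finite_support_of_okB_image_add_G0Seq himage.2

end IsAut

theorem stmt6_general (γ : Ordinal) (f : MU → MU)
    (hf : IsAut (MUuniv γ) f) :
    ∃ ν : Ordinal → G, SuppFin γ ν ∧ Set.EqOn f (fnu ν) (MUuniv γ) :=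
  ⟨autShift f, hf.suppFin, hf.eqOn_fnu⟩

/-- Conversely, if `γ < ω₁` and `f` is an automorphism of `M_{<γ}`,
then there exists `ν : γ → G` satisfying the support-finiteness condition
such that `f = f_ν` (on the universe of `M_{<γ}`). -/
theorem stmt6 (γ : Ordinal) (hγ : γ < omega1) (f : MU → MU)
    (hf : IsAut (MUuniv γ) f) :
    ∃ ν : Ordinal → G, SuppFin γ ν ∧ Set.EqOn f (fnu ν) (MUuniv γ) :=
  stmt6_general γ f hf
end
end
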